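/- There exists a constant C > 0, depending only on H, such that for all 0 ≤ s ≤ t ≤ 1, both |C(t,t) − C(s,t)| ≤ C (t−s)^{2H} and |C(t,s) − C(s,s)| ≤ C (t−s)^{2H}. -/

import Mathlib

set_option maxHeartbeats 1000000

open MeasureTheory intervalIntegral Real

/-- The covariance function of the Riemann–Liouville fractional Brownian motion:
`C(s,t) = ∫₀^(min s t) (t-r)^(H-1/2) (s-r)^(H-1/2) dr`. -/
noncomputable def rlCov (H s t : ℝ) : ℝ :=
  ∫ r in (0 : ℝ)..(min s t), (t - r) ^ (H - 1/2) * (s - r) ^ (H - 1/2)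

-- Bernoulli for nonpositive exponent
lemma bern_neg {u β : ℝ} (hu : 0 ≤ u) (hβ1 : -1 ≤ β) (hβ0 : β ≤ 0) :
    1 + β * u ≤ (1 + u) ^ β := by
  have h1 : (0:ℝ) < 1 + u := by linarith
  have hA : 0 < (1 + u) ^ β := Real.rpow_pos_of_pos h1 β
  by_cases hc : 1 + β * u ≤ 0
  · linarith
  push_neg at hc
  have hb : (1 + u) ^ (-β) ≤ 1 + (-β) * u :=
    rpow_one_add_le_one_add_mul_self (by linarith : (-1:ℝ) ≤ u) (by linarith) (by linarith)
  have hB : 0 < (1 + u) ^ (-β) := Real.rpow_pos_of_pos h1 (-β)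
  have key : (1 + u) ^ β * (1 + u) ^ (-β) = 1 := by
    rw [← Real.rpow_add h1]; simp
  nlinarith [sq_nonneg (β * u), mul_le_mul_of_nonneg_left hb hA.le]

-- tangent line inequality for rpow with negative exponent
lemma tangent {a b β : ℝ} (ha : 0 < a) (hab : a ≤ b) (hβ1 : -1 ≤ β) (hβ0 : β ≤ 0) :
    a ^ β - b ^ β ≤ (-β) * (b - a) * a ^ (β - 1) := by
  have hu : 0 ≤ (b - a) / a := div_nonneg (by linarith) ha.le
  have h1 : b ^ β = a ^ β * (1 + (b - a) / a) ^ β := by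
    rw [← Real.mul_rpow ha.le (by positivity)]
    congr 1
    field_simp
    ring
  have h2 := bern_neg hu hβ1 hβ0
  have hap : 0 < a ^ β := Real.rpow_pos_of_pos ha β
  have h3 : a ^ β * (1 + β * ((b - a) / a)) ≤ b ^ β := by
    rw [h1]; exact mul_le_mul_of_nonneg_left h2 hap.le
  have h4 : a ^ (β - 1) = a ^ β / a := by
    rw [Real.rpow_sub ha, Real.rpow_one]
  have h5 : a ^ β * (1 + β * ((b - a) / a)) = a ^ β + β * (b - a) * (a ^ β / a) := by
    field_simp
  rw [h4]; linarith [h5 ▸ h3]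

lemma sq_rpow {x β : ℝ} (hx : 0 ≤ x) (hβ : β ≠ 0) : x ^ β * x ^ β = x ^ (2 * β) := by
  rcases eq_or_lt_of_le hx with h | h
  · rw [← h, Real.zero_rpow hβ, Real.zero_rpow (by simpa using hβ : 2 * β ≠ 0), mul_zero]
  · rw [two_mul, Real.rpow_add h]

lemma integ_rpow_shift {a b c q : ℝ} (hq : -1 < q) :
    IntervalIntegrable (fun r => (c - r) ^ q) volume a b := by
  have h := (intervalIntegral.intervalIntegrable_rpow' hq (a := c - a) (b := c - b)).comp_sub_left c
  simpa using h

lemma integ_shift {a b c q : ℝ} (hq : -1 < q) :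
    ∫ r in a..b, (c - r) ^ q = ((c - a) ^ (q + 1) - (c - b) ^ (q + 1)) / (q + 1) := by
  rw [intervalIntegral.integral_comp_sub_left (fun x => x ^ q) c,
    integral_rpow (Or.inl hq)]

theorem rlCov_holder_bound' (H : ℝ) (hH0 : 0 < H) (hH1 : H < 1/2) :
    ∃ C > 0, ∀ s t : ℝ, 0 ≤ s → s ≤ t → t ≤ 1 →
      |(∫ r in (0:ℝ)..(min t t), (t - r) ^ (H - 1/2) * (t - r) ^ (H - 1/2))
        - (∫ r in (0:ℝ)..(min s t), (t - r) ^ (H - 1/2) * (s - r) ^ (H - 1/2))|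
        ≤ C * (t - s) ^ (2 * H) ∧
      |(∫ r in (0:ℝ)..(min t s), (s - r) ^ (H - 1/2) * (t - r) ^ (H - 1/2))
        - (∫ r in (0:ℝ)..(min s s), (s - r) ^ (H - 1/2) * (s - r) ^ (H - 1/2))|
        ≤ C * (t - s) ^ (2 * H) := by
  have hC : (0:ℝ) < 1/H + 1/2 := by positivity
  refine ⟨1/H + 1/2, hC, ?_⟩
  intro s t hs hst ht1
  set β : ℝ := H - 1/2 with hβdef
  have hβ0 : β < 0 := by rw [hβdef]; linarith
  have hβ1 : -(1:ℝ)/2 < β := by rw [hβdef]; linarith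
  have hβne : β ≠ 0 := ne_of_lt hβ0
  have h2β : (-1:ℝ) < 2 * β := by rw [hβdef]; linarith
  have h2βne : 2 * β ≠ 0 := by rw [hβdef]; intro h; linarith [h]
  have hβhalf : β ≤ 1 := by rw [hβdef]; linarith
  have h2H : 2 * β + 1 = 2 * H := by rw [hβdef]; ring
  have hHne : 2 * H ≠ 0 := by positivity
  set δ : ℝ := t - s with hδdef
  have hδ0 : 0 ≤ δ := by simp [hδdef]; linarith
  rcases eq_or_lt_of_le hst with heq | hlt
  · subst heq
    have hδz : δ = 0 := by simp [hδdef]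
    have hz : δ ^ (2*H) = 0 := by rw [hδz, Real.zero_rpow hHne]
    simp only [min_self, sub_self, abs_zero, hz, mul_zero, le_refl, and_self]
  -- main case s < t
  have hδpos : 0 < δ := by simp [hδdef]; linarith
  have ht0 : 0 ≤ t := le_trans hs hst
  rw [min_self, min_self, min_eq_left hst, min_eq_right hst]
  -- rewrite the squared integrands
  have e3 : (∫ r in (0:ℝ)..t, (t - r) ^ β * (t - r) ^ β)
      = ∫ r in (0:ℝ)..t, (t - r) ^ (2 * β) := by
    apply intervalIntegral.integral_congr
    intro r hr
    rw [Set.uIcc_of_le ht0] at hr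
    exact sq_rpow (by linarith [hr.2]) hβne
  have e4 : (∫ r in (0:ℝ)..s, (s - r) ^ β * (s - r) ^ β)
      = ∫ r in (0:ℝ)..s, (s - r) ^ (2 * β) := by
    apply intervalIntegral.integral_congr
    intro r hr
    rw [Set.uIcc_of_le hs] at hr
    exact sq_rpow (by linarith [hr.2]) hβne
  -- integrabilities
  have int_ss : ∀ a b : ℝ, IntervalIntegrable (fun r => (s - r) ^ (2*β)) volume a b :=
    fun a b => integ_rpow_shift h2β
  have int_tt : ∀ a b : ℝ, IntervalIntegrable (fun r => (t - r) ^ (2*β)) volume a b :=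
    fun a b => integ_rpow_shift h2β
  -- pointwise: for r < s, (t-r)^β ≤ (s-r)^β
  have hmono : ∀ r : ℝ, r < s → (t - r) ^ β ≤ (s - r) ^ β := fun r hr =>
    Real.rpow_le_rpow_of_nonpos (by linarith) (by linarith) hβ0.le
  have int_prod_ts : IntervalIntegrable (fun r => (t - r) ^ β * (s - r) ^ β) volume 0 s := by
    apply (int_ss 0 s).mono_fun
    · apply Measurable.aestronglyMeasurable
      fun_prop
    · filter_upwards [ae_restrict_mem measurableSet_uIoc] with r hr
      rw [Set.uIoc_of_le hs] at hr
      have h1 : 0 ≤ (t - r) ^ β := Real.rpow_nonneg (by linarith [hr.2]) β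
      have h2 : 0 ≤ (s - r) ^ β := Real.rpow_nonneg (by linarith [hr.2]) β
      simp only [Real.norm_eq_abs]
      rw [abs_of_nonneg (mul_nonneg h1 h2),
        abs_of_nonneg (Real.rpow_nonneg (by linarith [hr.2]) (2*β))]
      rcases eq_or_lt_of_le hr.2 with hrs | hrs
      · rw [hrs]
        simp [Real.zero_rpow hβne, Real.zero_rpow h2βne]
      · calc (t - r) ^ β * (s - r) ^ β ≤ (s - r) ^ β * (s - r) ^ β :=
              mul_le_mul_of_nonneg_right (hmono r hrs) h2
          _ = (s - r) ^ (2*β) := sq_rpow (by linarith) hβne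
  have int_prod_st : IntervalIntegrable (fun r => (s - r) ^ β * (t - r) ^ β) volume 0 s := by
    have := int_prod_ts
    simpa [mul_comm] using this
  -- the key nonnegative comparison function g
  set g : ℝ → ℝ := fun r => (s - r) ^ (2*β) - (s - r) ^ β * (t - r) ^ β with hgdef
  have int_g : IntervalIntegrable g volume 0 s := (int_ss 0 s).sub int_prod_st
  have hg_nonneg : ∀ r ∈ Set.Icc (0:ℝ) s, 0 ≤ g r := by
    intro r hr
    rcases eq_or_lt_of_le hr.2 with hrs | hrs
    · simp [hgdef, hrs, Real.zero_rpow hβne, Real.zero_rpow h2βne]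
    · have h2 : 0 ≤ (s - r) ^ β := Real.rpow_nonneg (by linarith) β
      have : (s - r) ^ β * (t - r) ^ β ≤ (s - r) ^ (2*β) := by
        calc (s - r) ^ β * (t - r) ^ β ≤ (s - r) ^ β * (s - r) ^ β :=
              mul_le_mul_of_nonneg_left (hmono r hrs) h2
          _ = (s - r) ^ (2*β) := sq_rpow (by linarith) hβne
      simp only [hgdef]; linarith
  have hg_le1 : ∀ r ∈ Set.Icc (0:ℝ) s, g r ≤ (s - r) ^ (2*β) := by
    intro r hr
    have h1 : 0 ≤ (t - r) ^ β := Real.rpow_nonneg (by linarith [hr.2]) β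
    have h2 : 0 ≤ (s - r) ^ β := Real.rpow_nonneg (by linarith [hr.2]) β
    simp only [hgdef]
    nlinarith
  -- the split point
  set c : ℝ := max (s - δ) 0 with hcdef
  have hc0 : 0 ≤ c := le_max_right _ _
  have hcs : c ≤ s := max_le (by linarith) hs
  have hscδ : s - c ≤ δ := by
    have : s - δ ≤ c := le_max_left _ _
    linarith
  -- piece 2 : ∫ c..s g ≤ δ^(2H)/(2H)
  have piece2 : (∫ r in c..s, g r) ≤ δ ^ (2*H) / (2*H) := by
    have step1 : (∫ r in c..s, g r) ≤ ∫ r in c..s, (s - r) ^ (2*β) := by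
      apply intervalIntegral.integral_mono_on hcs (int_g.mono_set' ?_) (int_ss c s)
      · intro r hr
        exact hg_le1 r ⟨le_trans hc0 hr.1, hr.2⟩
      · rw [Set.uIoc_of_le hcs, Set.uIoc_of_le hs]
        exact Set.Ioc_subset_Ioc hc0 le_rfl
    have step2 : (∫ r in c..s, (s - r) ^ (2*β)) = ((s - c) ^ (2*H) - 0) / (2*H) := by
      rw [integ_shift h2β, h2H, sub_self, Real.zero_rpow hHne]
    have step3 : (s - c) ^ (2*H) ≤ δ ^ (2*H) :=
      Real.rpow_le_rpow (by linarith) hscδ (by linarith)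
    rw [step2] at step1
    have h2Hpos : (0:ℝ) < 2*H := by linarith
    calc (∫ r in c..s, g r) ≤ ((s - c) ^ (2*H) - 0) / (2*H) := step1
      _ ≤ δ ^ (2*H) / (2*H) := by
          rw [sub_zero]
          gcongr
  -- piece 1 : ∫ 0..c g ≤ δ^(2H)/2
  have piece1 : (∫ r in (0:ℝ)..c, g r) ≤ δ ^ (2*H) / 2 := by
    rcases le_or_gt (s - δ) 0 with hsd | hsd
    · have hc : c = 0 := max_eq_right hsd
      rw [hc, intervalIntegral.integral_same]
      positivity
    · have hc : c = s - δ := max_eq_left hsd.le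
      have hspos : 0 < s := by linarith
      have hbound : ∀ r ∈ Set.Icc (0:ℝ) c, g r ≤ (-β) * δ * (s - r) ^ (2*β - 1) := by
        intro r hr
        have hrc : r ≤ c := hr.2
        have har : 0 < s - r := by rw [hc] at hrc; linarith
        have htr : s - r ≤ t - r := by linarith [hδpos]
        have htan := tangent har htr (by rw [hβdef]; linarith : (-1:ℝ) ≤ β) hβ0.le
        have hδeq : (t - r) - (s - r) = δ := by rw [hδdef]; ring
        rw [hδeq] at htan
        have hsrβ : 0 ≤ (s - r) ^ β := (Real.rpow_pos_of_pos har β).le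
        have hmul := mul_le_mul_of_nonneg_left htan hsrβ
        have hgl : g r = (s - r) ^ β * ((s - r) ^ β - (t - r) ^ β) := by
          have hsq := sq_rpow har.le hβne (x := s - r)
          simp only [hgdef]
          rw [← hsq]; ring
        have hrr : (s - r) ^ β * (-β * δ * (s - r) ^ (β - 1))
            = (-β) * δ * (s - r) ^ (2*β - 1) := by
          rw [show (2*β - 1 : ℝ) = β + (β - 1) by ring, Real.rpow_add har]
          ring
        rw [hgl, ← hrr]
        exact hmul
      have intRHS : IntervalIntegrable (fun r => (-β) * δ * (s - r) ^ (2*β - 1)) volume 0 c := by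
        apply ContinuousOn.intervalIntegrable
        apply ContinuousOn.mul continuousOn_const
        apply ContinuousOn.rpow_const ((continuous_const.sub continuous_id).continuousOn)
        intro x hx
        rw [Set.uIcc_of_le hc0, hc] at hx
        left
        intro h
        simp only [Pi.sub_apply, id_eq] at h
        have : δ ≤ s - x := by linarith [hx.2]
        linarith
      have step1 : (∫ r in (0:ℝ)..c, g r) ≤ ∫ r in (0:ℝ)..c, (-β) * δ * (s - r) ^ (2*β-1) := by
        apply intervalIntegral.integral_mono_on hc0 (int_g.mono_set' ?_) intRHS hbound
        rw [Set.uIoc_of_le hc0, Set.uIoc_of_le hs]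
        exact Set.Ioc_subset_Ioc le_rfl hcs
      have step2 : (∫ r in (0:ℝ)..c, (-β) * δ * (s - r) ^ (2*β-1))
          = (-β) * δ * ∫ r in (0:ℝ)..c, (s - r) ^ (2*β-1) :=
        intervalIntegral.integral_const_mul _ _
      have hsc : s - c = δ := by rw [hc]; ring
      have step3 : (∫ r in (0:ℝ)..c, (s - r) ^ (2*β-1)) = (s ^ (2*β) - δ ^ (2*β)) / (2*β) := by
        rw [intervalIntegral.integral_comp_sub_left (fun x => x ^ (2*β-1)) s]
        rw [integral_rpow (Or.inr ⟨by intro h; rw [hβdef] at h; norm_num at h; linarith, ?_⟩)]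
        · rw [hsc, sub_zero, show (2*β - 1 + 1 : ℝ) = 2*β by ring]
        · rw [hsc, sub_zero, Set.uIcc_of_le (by linarith : δ ≤ s)]
          intro h
          exact absurd h.1 (by linarith)
      have harith : (-β) * δ * ((s ^ (2*β) - δ ^ (2*β)) / (2*β))
          = δ * (δ ^ (2*β) - s ^ (2*β)) / 2 := by
        field_simp
        ring
      have hδ2H : δ ^ (2*H) = δ ^ (2*β) * δ := by
        rw [← h2H, Real.rpow_add_one hδpos.ne']
      have hs2β : 0 < s ^ (2*β) := Real.rpow_pos_of_pos hspos _
      calc (∫ r in (0:ℝ)..c, g r)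
          ≤ ∫ r in (0:ℝ)..c, (-β) * δ * (s - r) ^ (2*β-1) := step1
        _ = (-β) * δ * ((s ^ (2*β) - δ ^ (2*β)) / (2*β)) := by rw [step2, step3]
        _ = δ * (δ ^ (2*β) - s ^ (2*β)) / 2 := harith
        _ ≤ δ ^ (2*H) / 2 := by
            rw [hδ2H]
            nlinarith [mul_nonneg hδ0 hs2β.le]
  -- total bound on ∫ 0..s g
  have hsub1 : Set.uIoc (0:ℝ) c ⊆ Set.uIoc (0:ℝ) s := by
    rw [Set.uIoc_of_le hc0, Set.uIoc_of_le hs]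
    exact Set.Ioc_subset_Ioc le_rfl hcs
  have hsub2 : Set.uIoc c s ⊆ Set.uIoc (0:ℝ) s := by
    rw [Set.uIoc_of_le hcs, Set.uIoc_of_le hs]
    exact Set.Ioc_subset_Ioc hc0 le_rfl
  have hD : (∫ r in (0:ℝ)..s, g r) ≤ δ ^ (2*H) / (2*H) + δ ^ (2*H) / 2 := by
    rw [← intervalIntegral.integral_add_adjacent_intervals (b := c)
      (int_g.mono_set' hsub1) (int_g.mono_set' hsub2)]
    have := add_le_add piece1 piece2
    linarith
  have hDnonneg : 0 ≤ ∫ r in (0:ℝ)..s, g r :=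
    intervalIntegral.integral_nonneg hs hg_nonneg
  have hδ2Hnonneg : 0 ≤ δ ^ (2*H) := Real.rpow_nonneg hδ0 _
  constructor
  · -- first statement
    rw [e3]
    have hsplit : (∫ r in (0:ℝ)..t, (t - r) ^ (2*β))
        = (∫ r in (0:ℝ)..s, (t - r) ^ (2*β)) + ∫ r in s..t, (t - r) ^ (2*β) :=
      (intervalIntegral.integral_add_adjacent_intervals (int_tt 0 s) (int_tt s t)).symm
    have hA : (∫ r in s..t, (t - r) ^ (2*β)) = δ ^ (2*H) / (2*H) := by
      rw [integ_shift h2β, h2H, sub_self, Real.zero_rpow hHne, ← hδdef, sub_zero]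
    have hB : (∫ r in (0:ℝ)..s, (t - r)^(2*β)) - (∫ r in (0:ℝ)..s, (t - r)^β * (s - r)^β)
        = ∫ r in (0:ℝ)..s, ((t - r)^(2*β) - (t - r)^β * (s - r)^β) :=
      (intervalIntegral.integral_sub (int_tt 0 s) int_prod_ts).symm
    have int_f : IntervalIntegrable
        (fun r => (t - r)^(2*β) - (t - r)^β * (s - r)^β) volume 0 s :=
      (int_tt 0 s).sub int_prod_ts
    have habs : |∫ r in (0:ℝ)..s, ((t - r)^(2*β) - (t - r)^β * (s - r)^β)|
        ≤ ∫ r in (0:ℝ)..s, g r := by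
      refine le_trans (intervalIntegral.abs_integral_le_integral_abs hs) ?_
      apply intervalIntegral.integral_mono_ae_restrict hs int_f.abs int_g
      have hne : ∀ᵐ r ∂(volume.restrict (Set.Icc (0:ℝ) s)), r ≠ s := by
        apply ae_restrict_of_ae
        have h0 : (volume : Measure ℝ) {s} = 0 := measure_singleton s
        refine (MeasureTheory.ae_iff).2 ?_
        simpa [not_not, Set.setOf_eq_eq_singleton] using h0
      filter_upwards [hne, ae_restrict_mem measurableSet_Icc] with r hrne hr
      have hrs : r < s := lt_of_le_of_ne hr.2 hrne
      have har : 0 < s - r := by linarith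
      have hbr : 0 < t - r := by linarith
      have h1 : (t - r)^β ≤ (s - r)^β := hmono r hrs
      have h2 : 0 ≤ (t - r)^β := (Real.rpow_pos_of_pos hbr β).le
      have h3 : 0 ≤ (s - r)^β := (Real.rpow_pos_of_pos har β).le
      have e5 : (t - r)^(2*β) = (t - r)^β * (t - r)^β := (sq_rpow hbr.le hβne).symm
      have e6 : (s - r)^(2*β) = (s - r)^β * (s - r)^β := (sq_rpow har.le hβne).symm
      show |(t - r)^(2*β) - (t - r)^β * (s - r)^β| ≤ g r
      rw [e5, abs_of_nonpos (by nlinarith)]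
      simp only [hgdef]
      rw [e6]
      nlinarith [sq_nonneg ((s - r)^β - (t - r)^β)]
    rw [hsplit]
    have hrearr : (∫ r in (0:ℝ)..s, (t - r) ^ (2*β)) + (∫ r in s..t, (t - r) ^ (2*β))
        - (∫ r in (0:ℝ)..s, (t - r)^β * (s - r)^β)
        = (∫ r in (0:ℝ)..s, ((t - r)^(2*β) - (t - r)^β * (s - r)^β))
          + ∫ r in s..t, (t - r) ^ (2*β) := by
      rw [← hB]; ring
    rw [hrearr]
    calc |(∫ r in (0:ℝ)..s, ((t - r)^(2*β) - (t - r)^β * (s - r)^β))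
          + ∫ r in s..t, (t - r) ^ (2*β)|
        ≤ |∫ r in (0:ℝ)..s, ((t - r)^(2*β) - (t - r)^β * (s - r)^β)|
          + |∫ r in s..t, (t - r) ^ (2*β)| := abs_add_le _ _
      _ ≤ (∫ r in (0:ℝ)..s, g r) + δ ^ (2*H) / (2*H) := by
          apply add_le_add habs
          rw [hA, abs_of_nonneg (by positivity)]
      _ ≤ (δ ^ (2*H) / (2*H) + δ ^ (2*H) / 2) + δ ^ (2*H) / (2*H) :=
          add_le_add hD le_rfl
      _ = (1/H + 1/2) * δ ^ (2*H) := by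
          field_simp
          ring
  · -- second statement
    rw [e4]
    have hkey : (∫ r in (0:ℝ)..s, (s - r) ^ β * (t - r) ^ β)
        - (∫ r in (0:ℝ)..s, (s - r) ^ (2*β)) = - ∫ r in (0:ℝ)..s, g r := by
      rw [← intervalIntegral.integral_sub int_prod_st (int_ss 0 s),
        ← intervalIntegral.integral_neg]
      apply intervalIntegral.integral_congr
      intro r _
      simp only [hgdef]
      ring
    rw [hkey, abs_neg, abs_of_nonneg hDnonneg]
    calc (∫ r in (0:ℝ)..s, g r) ≤ δ ^ (2*H) / (2*H) + δ ^ (2*H) / 2 := hD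
      _ ≤ (1/H + 1/2) * δ ^ (2*H) := by
          rw [show (1/H + 1/2) * δ^(2*H) = δ^(2*H)/H + δ^(2*H)/2 from by ring]
          gcongr
          linarith

/-- for `0 ≤ s ≤ t ≤ 1`,
`|C(t,t) - C(s,t)| ≤ C (t-s)^(2H)` and `|C(t,s) - C(s,s)| ≤ C (t-s)^(2H)`. -/
theorem rlCov_holder_bound (H : ℝ) (hH0 : 0 < H) (hH1 : H < 1/2) :
    ∃ C > 0, ∀ s t : ℝ, 0 ≤ s → s ≤ t → t ≤ 1 →
      |rlCov H t t - rlCov H s t| ≤ C * (t - s) ^ (2 * H) ∧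
      |rlCov H t s - rlCov H s s| ≤ C * (t - s) ^ (2 * H) := by
  obtain ⟨C, hC, h⟩ := rlCov_holder_bound' H hH0 hH1
  refine ⟨C, hC, fun s t hs hst ht1 => ?_⟩
  simpa [rlCov] using h s t hs hst ht1
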